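/- Let w = u·a·v·b·Sym(u)·b be an element of F_n, where u·a is the principal prefix of w. Then the word u·a can be decomposed into two factors u₁ and u₂ (u·a = u₁·u₂) such that either u₂·ū₁ or ū₂·u₁ is a palindrome. -/

import Mathlib

/-- The two-letter alphabet {a, b}. -/
inductive Letter : Type
  | a : Letter
  | b : Letter
deriving DecidableEq, BEq, Repr

/-- Words over the alphabet {a, b}. -/
abbrev Word := List Letter

/-- δ(w) = |w|_a − |w|_b. -/
def delta (w : Word) : ℤ := (w.count Letter.a : ℤ) - (w.count Letter.b : ℤ)

/-- A Dyck word: δ(w) = 0 and δ(p) ≥ 0 for every prefix p of w. -/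
def IsDyck (w : Word) : Prop := delta w = 0 ∧ ∀ p : Word, p <+: w → 0 ≤ delta p

/-- Membership in D_n: w = d·b with d a Dyck word of length 2n. -/
def InD (n : ℕ) (w : Word) : Prop :=
  ∃ d : Word, IsDyck d ∧ d.length = 2 * n ∧ w = d ++ [Letter.b]

/-- Exchanging the letters a and b. -/
def Letter.flip : Letter → Letter
  | .a => .b
  | .b => .a

/-- The complement w̄ of a word w. -/
def comp (w : Word) : Word := w.map Letter.flip

/-- Sym(w): the complement of the mirror (reversal) of w. -/
def sym (w : Word) : Word := comp w.reverse

/-- A palindrome: a word equal to its mirror. -/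
def Palindrome (w : Word) : Prop := w.reverse = w

/-- w' is a conjugate of w: w = u·v and w' = v·u. -/
def Conj (w w' : Word) : Prop := ∃ u v : Word, w = u ++ v ∧ w' = v ++ u

/-- u is the principal prefix of w: the shortest prefix of w with δ(u) maximal. -/
def IsPrincipalPrefix (u w : Word) : Prop :=
  u <+: w ∧ (∀ p : Word, p <+: w → delta p ≤ delta u) ∧
    (∀ p : Word, p <+: w → delta p = delta u → u.length ≤ p.length)

/-- The graph of the map γ: writing w = u·v·b with u the principal prefix of w,
    γ(w) = v̄·b·ū. -/
def GammaRel (w w' : Word) : Prop :=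
  ∃ u v : Word, IsPrincipalPrefix u w ∧ w = u ++ v ++ [Letter.b] ∧
    w' = comp v ++ [Letter.b] ++ comp u

/-- F_n: the fixed points of γ in D_n. -/
def InF (n : ℕ) (w : Word) : Prop := InD n w ∧ GammaRel w w

/-- F_γ = ⋃_{n ≥ 1} F_n. -/
def InFgamma (w : Word) : Prop := ∃ n : ℕ, 1 ≤ n ∧ InF n w

/-- x^y: concatenation of the word x with itself y times. -/
def wpow (x : Word) : ℕ → Word
  | 0 => []
  | k + 1 => x ++ wpow x k


/-!
Write `x = u·a`. Since `x` is the principal prefix of the fixed point `w = x·v·b·Sym(u)·b`,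
the equation `γ(w) = w` reads `x·v = v̄·x̃` on the first `|x| + |v|` letters. Equations of the
form `x·v = v̄·x̃` and `x·v = v̄·Sym(x)` are solved by induction on `|v|`: if `|v| ≥ |x|`, then
`v̄ = x·t`, so `x̄·t̄ = v` is `t` followed by `x̃` (resp. `Sym(x)`), and complementing shows that
`t` solves the other equation; if `|v| < |x|`, then `x = v̄·r`, and comparing lengths forces `r`
and `v` to be palindromes or `Sym`-fixed, which exhibits the split directly.
-/

instance : LawfulBEq Letter where
  rfl {c} := by cases c <;> rfl
  eq_of_beq {c d} := by cases c <;> cases d <;> decide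

@[simp] lemma Letter.flip_a : Letter.a.flip = .b := rfl

@[simp] lemma Letter.flip_b : Letter.b.flip = .a := rfl

@[simp] lemma Letter.flip_flip (c : Letter) : c.flip.flip = c := by cases c <;> rfl

lemma Letter.flip_injective : Function.Injective Letter.flip :=
  Function.LeftInverse.injective Letter.flip_flip

@[simp] lemma comp_nil : comp [] = [] := rfl

@[simp] lemma comp_cons (c : Letter) (w : Word) : comp (c :: w) = c.flip :: comp w := rfl

@[simp] lemma comp_comp (w : Word) : comp (comp w) = w := by
  simp [comp, Function.comp_def]

@[simp] lemma comp_append (w₁ w₂ : Word) : comp (w₁ ++ w₂) = comp w₁ ++ comp w₂ :=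
  List.map_append

lemma comp_reverse (w : Word) : comp w.reverse = (comp w).reverse := List.map_reverse

@[simp] lemma length_comp (w : Word) : (comp w).length = w.length := List.length_map _

@[simp] lemma comp_sym (w : Word) : comp (sym w) = w.reverse := comp_comp _

lemma sym_eq_reverse_comp (w : Word) : sym w = (comp w).reverse := comp_reverse w

@[simp] lemma length_sym (w : Word) : (sym w).length = w.length := by simp [sym]

lemma count_a_comp (w : Word) : (comp w).count .a = w.count .b :=
  List.count_map_of_injective w _ Letter.flip_injective .b

lemma count_a_add_count_b (w : Word) : w.count .a + w.count .b = w.length := by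
  induction w with
  | nil => rfl
  | cons c w ih => cases c <;> simp <;> omega

lemma exists_eq_append_sym_of_sym_eq {r : Word} (h : sym r = r) : ∃ t : Word, r = t ++ sym t := by
  -- `sym` swaps the letter counts, so `r` has even length and its second half is `sym` of the first
  have hcount : r.count .a = r.count .b := by
    conv_lhs => rw [← h]
    rw [sym, count_a_comp, List.count_reverse]
  have hlen : r.length = 2 * r.count .a := by
    rw [← count_a_add_count_b]; omega
  refine ⟨r.take (r.count .a), ?_⟩
  conv_lhs => rw [← List.take_append_drop (r.count .a) r]
  rw [sym, List.reverse_take, comp, List.map_drop, ← comp, ← sym, h]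
  congr 2
  omega

lemma Palindrome.reverse_append_append {r : Word} (hr : Palindrome r) (t : Word) :
    Palindrome (t.reverse ++ r ++ t) := by
  unfold Palindrome at hr ⊢
  simp [hr]

lemma exists_of_append_eq_comp_append {x v z : Word} (hx : x ≠ []) (h : x ++ v = comp v ++ z) :
    (∃ t, t.length < v.length ∧ x ++ t = comp t ++ comp z) ∨ ∃ r, x = comp v ++ r ∧ z = r ++ v := by
  rcases List.append_eq_append_iff.mp h with ⟨t, hv, hz⟩ | hsmall
  · refine Or.inl ⟨t, ?_, ?_⟩
    · have hlen := congrArg List.length hv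
      simp only [length_comp, List.length_append] at hlen
      have hx_pos := List.length_pos_iff.mpr hx
      omega
    · rw [← comp_comp v, hv, comp_append] at hz
      simpa using congrArg comp hz
  · exact Or.inr hsmall

def PalindromicSplit (x : Word) : Prop :=
  ∃ u₁ u₂ : Word, x = u₁ ++ u₂ ∧ (Palindrome (u₂ ++ comp u₁) ∨ Palindrome (comp u₂ ++ u₁))

namespace PalindromicSplit

lemma nil : PalindromicSplit [] := ⟨[], [], rfl, Or.inl rfl⟩

lemma comp_append_reverse_append {r : Word} (hr : Palindrome r) (t : Word) :
    PalindromicSplit (comp t ++ t.reverse ++ r) :=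
  ⟨comp t, t.reverse ++ r, List.append_assoc _ _ _,
    Or.inl (by simpa using hr.reverse_append_append t)⟩

lemma append_append_sym {p : Word} (hp : Palindrome p) (t : Word) :
    PalindromicSplit (p ++ t ++ sym t) :=
  ⟨p ++ t, sym t, rfl, Or.inr (by simpa [List.append_assoc] using hp.reverse_append_append t)⟩

mutual

theorem of_append_eq_reverse {x v : Word} (h : x ++ v = comp v ++ x.reverse) :
    PalindromicSplit x := by
  rcases eq_or_ne x [] with rfl | hx
  · exact nil
  rcases exists_of_append_eq_comp_append hx h with ⟨t, hlt, ht⟩ | ⟨r, rfl, hr⟩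
  · exact of_append_eq_sym (v := t) (by rwa [sym_eq_reverse_comp, ← comp_reverse])
  · rw [List.reverse_append, ← comp_reverse, ← sym] at hr
    obtain ⟨hr_pal, hv_sym⟩ := List.append_inj' hr (by simp)
    obtain ⟨t, rfl⟩ := exists_eq_append_sym_of_sym_eq hv_sym
    simpa [List.append_assoc] using comp_append_reverse_append hr_pal t
termination_by v.length

theorem of_append_eq_sym {x v : Word} (h : x ++ v = comp v ++ sym x) :
    PalindromicSplit x := by
  rcases eq_or_ne x [] with rfl | hx
  · exact nil
  rcases exists_of_append_eq_comp_append hx h with ⟨t, hlt, ht⟩ | ⟨r, rfl, hr⟩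
  · exact of_append_eq_reverse (v := t) (by simpa using ht)
  · rw [sym, List.reverse_append, comp_append, ← sym, comp_reverse, comp_comp] at hr
    obtain ⟨hr_sym, hv_pal⟩ := List.append_inj' hr (by simp)
    obtain ⟨t, rfl⟩ := exists_eq_append_sym_of_sym_eq hr_sym
    have hpal : Palindrome (comp v) := by rw [Palindrome, ← comp_reverse, hv_pal]
    simpa [List.append_assoc] using append_append_sym hpal t
termination_by v.length

end

end PalindromicSplit

lemma IsPrincipalPrefix.unique {u u' w : Word} (hu : IsPrincipalPrefix u w)
    (hu' : IsPrincipalPrefix u' w) : u = u' := by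
  have hδ : delta u = delta u' := le_antisymm (hu'.2.1 u hu.1) (hu.2.1 u' hu'.1)
  have hlen : u.length = u'.length := le_antisymm (hu.2.2 u' hu'.1 hδ.symm) (hu'.2.2 u hu.1 hδ)
  exact (List.prefix_of_prefix_length_le hu.1 hu'.1 hlen.le).eq_of_length hlen

lemma GammaRel.eq_of_self {w x y : Word} (hγ : GammaRel w w) (hx : IsPrincipalPrefix x w)
    (hw : w = x ++ y ++ [.b]) : w = comp y ++ [.b] ++ comp x := by
  obtain ⟨x', y', hx', hw', hγw⟩ := hγ
  obtain rfl := hx'.unique hx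
  obtain rfl : y' = y := List.append_cancel_left (List.append_cancel_right (hw'.symm.trans hw))
  exact hγw

/-- Corollary: for w = u·a·v·b·Sym(u)·b ∈ F_n with u·a its principal prefix,
    u·a decomposes as u₁·u₂ with u₂·ū₁ or ū₂·u₁ a palindrome. -/
theorem coro_decomposition (n : ℕ) (w u v : Word) (hw : InF n w)
    (hdec : w = u ++ [Letter.a] ++ v ++ [Letter.b] ++ sym u ++ [Letter.b])
    (hpp : IsPrincipalPrefix (u ++ [Letter.a]) w) :
    ∃ u₁ u₂ : Word, u ++ [Letter.a] = u₁ ++ u₂ ∧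
      (Palindrome (u₂ ++ comp u₁) ∨ Palindrome (comp u₂ ++ u₁)) := by
  have hfix := hw.2.eq_of_self hpp (y := v ++ [.b] ++ sym u) (by simp [hdec])
  rw [hdec] at hfix
  have hx : u ++ [Letter.a] ++ v = comp v ++ (u ++ [Letter.a]).reverse := by
    refine List.append_inj_left' (t₁ := [.b] ++ sym u ++ [.b]) (t₂ := [.b] ++ comp u ++ [.b]) ?_
      (by simp)
    simpa [List.append_assoc] using hfix
  exact PalindromicSplit.of_append_eq_reverse hx
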